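/- Satisfiability of SHIQ-concepts with respect to terminologies and role hierarchies is polynomially reducible to satisfiability of SHIQ-concepts with respect to role hierarchies alone: there exist a polynomial p and a function mapping each triple (C, T, R) of a SHIQ-concept C, a terminology T, and a set R of role inclusion axioms to a pair (C', R') consisting of a SHIQ-concept and a set of role inclusion axioms, such that the size of (C', R') is at most p applied to the size of (C, T, R), and C is satisfiable with respect to T and R⁺ if and only if C' is satisfiable with respect to R'⁺. -/

import Mathlib

/-- SHIQ-roles: role names (indexed by ℕ) and their inverses. -/
inductive Role where
  | atom : ℕ → Role
  | inv  : ℕ → Role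
deriving DecidableEq

/-- The function `Inv` on roles: `Inv(R) = R⁻`, `Inv(R⁻) = R`. -/
def Role.Inv : Role → Role
  | .atom r => .inv r
  | .inv r  => .atom r

/-- The underlying role name of a (possibly inverse) role. -/
def Role.name : Role → ℕ
  | .atom r => r
  | .inv r  => r

/-- Concepts of the SHIQ family (with ⊤ and ⊥ for convenience). -/
inductive DLConcept where
  | top : DLConcept
  | bot : DLConcept
  | atom : ℕ → DLConcept
  | neg : DLConcept → DLConcept
  | and : DLConcept → DLConcept → DLConcept
  | or : DLConcept → DLConcept → DLConcept
  | all : Role → DLConcept → DLConcept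
  | ex : Role → DLConcept → DLConcept
  | atleast : ℕ → Role → DLConcept → DLConcept
  | atmost : ℕ → Role → DLConcept → DLConcept
deriving DecidableEq

/-- An interpretation: a (nonempty) domain, a valuation of concept names and
    of role names. -/
structure Interp where
  Dom : Type
  dom_nonempty : Nonempty Dom
  cI : ℕ → Set Dom
  rI : ℕ → Dom → Dom → Prop

/-- Semantics of (possibly inverse) roles. -/
def Interp.rSem (I : Interp) : Role → I.Dom → I.Dom → Prop
  | .atom r => I.rI r
  | .inv r  => fun x y => I.rI r y x

/-- Semantics of concepts; number restrictions are interpreted by counting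
    role successors (via cardinalities, so that infinite sets are handled
    correctly). -/
def Interp.cSem (I : Interp) : DLConcept → Set I.Dom
  | .top => Set.univ
  | .bot => ∅
  | .atom a => I.cI a
  | .neg C => (I.cSem C)ᶜ
  | .and C D => I.cSem C ∩ I.cSem D
  | .or C D => I.cSem C ∪ I.cSem D
  | .all R C => {x | ∀ y, I.rSem R x y → y ∈ I.cSem C}
  | .ex R C => {x | ∃ y, I.rSem R x y ∧ y ∈ I.cSem C}
  | .atleast n R C => {x | (n : Cardinal) ≤ Cardinal.mk {y // I.rSem R x y ∧ y ∈ I.cSem C}}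
  | .atmost n R C => {x | Cardinal.mk {y // I.rSem R x y ∧ y ∈ I.cSem C} ≤ (n : Cardinal)}

/-- `I.Good Rp`: the interpretation interprets every transitive role name
    (member of `Rp`) by a transitive relation. -/
def Interp.Good (I : Interp) (Rp : Set ℕ) : Prop :=
  ∀ r ∈ Rp, Transitive (I.rI r)

/-- The role hierarchy ⊑* generated by a finite set of role inclusion axioms:
    inverses are added and the transitive-reflexive closure is taken. -/
def SubRole (RIA : List (Role × Role)) : Role → Role → Prop :=
  Relation.ReflTransGen (fun R S => (R, S) ∈ RIA ∨ (R.Inv, S.Inv) ∈ RIA)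

/-- `I ⊨ R⁺`: the interpretation satisfies the role hierarchy. -/
def Interp.ModelsRH (I : Interp) (RIA : List (Role × Role)) : Prop :=
  ∀ R S, SubRole RIA R S → ∀ x y, I.rSem R x y → I.rSem S x y

/-- `Trans(R)`: a (possibly inverse) role is transitive iff its name is in `Rp`. -/
def RTrans (Rp : Set ℕ) : Role → Prop
  | .atom r => r ∈ Rp
  | .inv r  => r ∈ Rp

/-- A role is simple iff it is neither transitive nor has a transitive sub-role. -/
def SimpleRole (Rp : Set ℕ) (RIA : List (Role × Role)) (R : Role) : Prop :=
  ∀ S, SubRole RIA S R → ¬ RTrans Rp S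

/-- SHIQ-concepts: number restrictions occur only on simple roles. -/
def DLConcept.IsSHIQ (Rp : Set ℕ) (RIA : List (Role × Role)) : DLConcept → Prop
  | .top | .bot | .atom _ => True
  | .neg C => C.IsSHIQ Rp RIA
  | .and C D | .or C D => C.IsSHIQ Rp RIA ∧ D.IsSHIQ Rp RIA
  | .all _ C | .ex _ C => C.IsSHIQ Rp RIA
  | .atleast _ R C | .atmost _ R C => SimpleRole Rp RIA R ∧ C.IsSHIQ Rp RIA

/-- Satisfiability of a concept w.r.t. a role hierarchy. -/
def Satisfiable (Rp : Set ℕ) (RIA : List (Role × Role)) (C : DLConcept) : Prop :=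
  ∃ I : Interp, I.Good Rp ∧ I.ModelsRH RIA ∧ (I.cSem C).Nonempty

/-- Subsumption of concepts w.r.t. a role hierarchy. -/
def Subsumes (Rp : Set ℕ) (RIA : List (Role × Role)) (C D : DLConcept) : Prop :=
  ∀ I : Interp, I.Good Rp → I.ModelsRH RIA → I.cSem C ⊆ I.cSem D
/-- A terminology: a finite list of general concept inclusion axioms `C ⊑ D`. -/
abbrev Terminology := List (DLConcept × DLConcept)

/-- `I` is a model of the terminology `T`. -/
def Interp.ModelsT (I : Interp) (T : Terminology) : Prop :=
  ∀ p ∈ T, I.cSem p.1 ⊆ I.cSem p.2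

/-- Satisfiability w.r.t. a terminology and a role hierarchy. -/
def SatisfiableT (Rp : Set ℕ) (RIA : List (Role × Role)) (T : Terminology)
    (C : DLConcept) : Prop :=
  ∃ I : Interp, I.Good Rp ∧ I.ModelsRH RIA ∧ I.ModelsT T ∧ (I.cSem C).Nonempty

/-- Subsumption w.r.t. a terminology and a role hierarchy. -/
def SubsumesT (Rp : Set ℕ) (RIA : List (Role × Role)) (T : Terminology)
    (C D : DLConcept) : Prop :=
  ∀ I : Interp, I.Good Rp → I.ModelsRH RIA → I.ModelsT T → I.cSem C ⊆ I.cSem D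

/-- `C_T`: the conjunction of all `¬Cᵢ ⊔ Dᵢ` for `Cᵢ ⊑ Dᵢ ∈ T`. -/
def CT (T : Terminology) : DLConcept :=
  T.foldr (fun p acc => DLConcept.and (DLConcept.or (DLConcept.neg p.1) p.2) acc) DLConcept.top

/-- The role names occurring in a concept. -/
def DLConcept.roleNames : DLConcept → Finset ℕ
  | .top | .bot | .atom _ => ∅
  | .neg C => C.roleNames
  | .and C D | .or C D => C.roleNames ∪ D.roleNames
  | .all R C | .ex R C => insert R.name C.roleNames
  | .atleast _ R C | .atmost _ R C => insert R.name C.roleNames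

/-- The role names occurring in a terminology. -/
def termRoleNames (T : Terminology) : Finset ℕ :=
  T.foldr (fun p acc => p.1.roleNames ∪ p.2.roleNames ∪ acc) ∅

/-- The role names occurring in a set of role inclusion axioms. -/
def riaRoleNames (RIA : List (Role × Role)) : Finset ℕ :=
  RIA.foldr (fun p acc => insert p.1.name (insert p.2.name acc)) ∅

/-- `R_U`: the given role inclusion axioms extended with `R ⊑ U` and
    `Inv(R) ⊑ U` for every role (name) `r` in `names`. -/
def addU (RIA : List (Role × Role)) (names : Finset ℕ) (u : ℕ) : List (Role × Role) :=
  RIA ++ (names.sort (· ≤ ·)).map (fun r => (Role.atom r, Role.atom u))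
      ++ (names.sort (· ≤ ·)).map (fun r => (Role.inv r, Role.atom u))

/-- The size (number of symbols, numbers written in unary) of a concept. -/
def DLConcept.size : DLConcept → ℕ
  | .top | .bot | .atom _ => 1
  | .neg C => C.size + 1
  | .and C D | .or C D => C.size + D.size + 1
  | .all _ C | .ex _ C => C.size + 2
  | .atleast n _ C | .atmost n _ C => C.size + n + 3

/-- The size of a terminology. -/
def termSize (T : Terminology) : ℕ :=
  T.foldr (fun p acc => p.1.size + p.2.size + 1 + acc) 0

/-- The size of a set of role inclusion axioms (three symbols per axiom). -/
def riaSize (RIA : List (Role × Role)) : ℕ := 3 * RIA.length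
section Aux

open Relation

lemma Role.name_Inv (R : Role) : R.Inv.name = R.name := by cases R <;> rfl

lemma DLConcept.size_pos (C : DLConcept) : 1 ≤ C.size := by
  cases C <;> simp [DLConcept.size]

/-! ### Basic membership lemmas -/

lemma mem_riaRoleNames {RIA : List (Role × Role)} {p : Role × Role} (hp : p ∈ RIA) :
    p.1.name ∈ riaRoleNames RIA ∧ p.2.name ∈ riaRoleNames RIA := by
  induction RIA with
  | nil => simp at hp
  | cons q l ih =>
    rcases List.mem_cons.mp hp with rfl | hp
    · constructor <;> simp [riaRoleNames]
    · rcases ih hp with ⟨h1, h2⟩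
      constructor <;> simp [riaRoleNames] <;> simp [riaRoleNames] at h1 h2 <;> tauto

lemma mem_termRoleNames {T : Terminology} {p : DLConcept × DLConcept} (hp : p ∈ T) :
    p.1.roleNames ⊆ termRoleNames T ∧ p.2.roleNames ⊆ termRoleNames T := by
  induction T with
  | nil => simp at hp
  | cons q l ih =>
    have hstep : termRoleNames (q :: l) = q.1.roleNames ∪ q.2.roleNames ∪ termRoleNames l := rfl
    rcases List.mem_cons.mp hp with rfl | hp
    · rw [hstep]
      constructor <;> intro a ha <;> simp [Finset.mem_union] <;> tauto
    · rcases ih hp with ⟨h1, h2⟩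
      rw [hstep]
      constructor <;> intro a ha <;> simp only [Finset.mem_union] <;> tauto

lemma roleNames_CT (T : Terminology) : (CT T).roleNames ⊆ termRoleNames T := by
  induction T with
  | nil => simp [CT, DLConcept.roleNames]
  | cons q l ih =>
    have h1 : CT (q :: l) = .and (.or (.neg q.1) q.2) (CT l) := rfl
    have h2 : termRoleNames (q :: l) = q.1.roleNames ∪ q.2.roleNames ∪ termRoleNames l := rfl
    rw [h1, h2]
    intro a ha
    simp only [DLConcept.roleNames, Finset.mem_union] at ha ⊢
    rcases ha with (h | h) | h
    · tauto
    · tauto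
    · exact Or.inr (ih h)

/-! ### addU membership -/

lemma mem_addU_of_mem {RIA : List (Role × Role)} {names : Finset ℕ} {u : ℕ}
    {p : Role × Role} (hp : p ∈ RIA) : p ∈ addU RIA names u := by
  simp [addU, hp]

lemma atomU_mem_addU {RIA : List (Role × Role)} {names : Finset ℕ} {u r : ℕ}
    (hr : r ∈ names) : (Role.atom r, Role.atom u) ∈ addU RIA names u := by
  simp [addU]
  exact Or.inr hr

lemma invU_mem_addU {RIA : List (Role × Role)} {names : Finset ℕ} {u r : ℕ}
    (hr : r ∈ names) : (Role.inv r, Role.atom u) ∈ addU RIA names u := by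
  simp [addU]
  exact Or.inr hr

lemma mem_addU_cases {RIA : List (Role × Role)} {names : Finset ℕ} {u : ℕ}
    {p : Role × Role} (hp : p ∈ addU RIA names u) :
    p ∈ RIA ∨ p.2 = Role.atom u := by
  simp [addU] at hp
  rcases hp with h | h | h
  · exact Or.inl h
  · right; obtain ⟨r, _, h⟩ := h; rw [← h]
  · right; obtain ⟨r, _, h⟩ := h; rw [← h]

lemma subRole_addU {RIA : List (Role × Role)} {names : Finset ℕ} {u : ℕ} {R S : Role}
    (h : SubRole RIA R S) : SubRole (addU RIA names u) R S := by
  refine Relation.ReflTransGen.mono (fun a b hab => ?_) _ _ h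
  rcases hab with h | h
  · exact Or.inl (mem_addU_of_mem h)
  · exact Or.inr (mem_addU_of_mem h)

lemma subRole_of_addU (RIA : List (Role × Role)) (names : Finset ℕ) (u : ℕ)
    (hsub : ∀ n ∈ riaRoleNames RIA, n ∈ names) (hu : u ∉ names)
    {R S : Role} (h : SubRole (addU RIA names u) R S) :
    S.name ≠ u → SubRole RIA R S := by
  induction h with
  | refl => intro _; exact Relation.ReflTransGen.refl
  | @tail M S' hRM hMS ih =>
    intro hS
    have hedge : (M, S') ∈ RIA ∨ (M.Inv, S'.Inv) ∈ RIA := by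
      rcases hMS with h | h
      · rcases mem_addU_cases h with h | h
        · exact Or.inl h
        · exact absurd (show S'.name = u by have h2 : S' = Role.atom u := h; simp [h2, Role.name]) hS
      · rcases mem_addU_cases h with h | h
        · exact Or.inr h
        · exfalso
          apply hS
          have h2 : S'.Inv = Role.atom u := h
          have : S'.Inv.name = u := by simp [h2, Role.name]
          rwa [Role.name_Inv] at this
    have hM : M.name ≠ u := by
      intro hMu
      apply hu
      rcases hedge with h | h
      · exact hsub _ (hMu ▸ (mem_riaRoleNames h).1)
      · have := (mem_riaRoleNames h).1
        rw [Role.name_Inv] at this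
        exact hsub _ (hMu ▸ this)
    exact Relation.ReflTransGen.tail (ih hM) hedge

lemma subRole_head {RIA : List (Role × Role)} {R S : Role} (h : SubRole RIA R S) :
    R = S ∨ R.name ∈ riaRoleNames RIA := by
  rcases Relation.ReflTransGen.cases_head h with rfl | ⟨M, hRM, _⟩
  · exact Or.inl rfl
  · right
    rcases hRM with h | h
    · exact (mem_riaRoleNames h).1
    · have := (mem_riaRoleNames h).1
      rwa [Role.name_Inv] at this

end Aux
section Aux2

/-! ### CT semantics -/

lemma mem_cSem_CT {I : Interp} {T : Terminology} {y : I.Dom} :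
    y ∈ I.cSem (CT T) ↔ ∀ p ∈ T, (y ∈ I.cSem p.1 → y ∈ I.cSem p.2) := by
  induction T with
  | nil => simp [CT, Interp.cSem]
  | cons q l ih =>
    have h1 : CT (q :: l) = .and (.or (.neg q.1) q.2) (CT l) := rfl
    rw [h1]
    simp only [Interp.cSem, Set.mem_inter_iff, Set.mem_union, Set.mem_compl_iff, ih,
      List.mem_cons]
    constructor
    · rintro ⟨h, hl⟩ p (rfl | hp)
      · intro hy; tauto
      · exact hl p hp
    · intro h
      refine ⟨?_, fun p hp => h p (Or.inr hp)⟩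
      by_cases hy : y ∈ I.cSem q.1
      · exact Or.inr (h q (Or.inl rfl) hy)
      · exact Or.inl hy

lemma modelsT_iff {I : Interp} {T : Terminology} :
    I.ModelsT T ↔ ∀ y : I.Dom, y ∈ I.cSem (CT T) := by
  constructor
  · intro h y
    rw [mem_cSem_CT]
    intro p hp hy
    exact h p hp hy
  · intro h p hp y hy
    exact (mem_cSem_CT.mp (h y)) p hp hy

/-! ### Extension of an interpretation by a universal fresh role -/

def Interp.extend (I : Interp) (u : ℕ) : Interp :=
  ⟨I.Dom, I.dom_nonempty, I.cI, fun r => if r = u then fun _ _ => True else I.rI r⟩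

lemma extend_rSem_ne {I : Interp} {u : ℕ} {R : Role} (h : R.name ≠ u) :
    (I.extend u).rSem R = I.rSem R := by
  cases R with
  | atom r => simp [Interp.extend, Interp.rSem, Role.name] at h ⊢; simp [h]
  | inv r => simp [Interp.extend, Interp.rSem, Role.name] at h ⊢; simp [h]

lemma extend_rSem_u {I : Interp} {u : ℕ} {R : Role} (h : R.name = u)
    (x y : I.Dom) : (I.extend u).rSem R x y := by
  cases R with
  | atom r => simp [Role.name] at h; simp [Interp.extend, Interp.rSem, h]
  | inv r => simp [Role.name] at h; simp [Interp.extend, Interp.rSem, h]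

lemma extend_cSem {I : Interp} {u : ℕ} :
    ∀ E : DLConcept, u ∉ E.roleNames → (I.extend u).cSem E = I.cSem E := by
  intro E
  induction E with
  | top => intro _; rfl
  | bot => intro _; rfl
  | atom a => intro _; rfl
  | neg C ih =>
    intro h
    simp only [DLConcept.roleNames] at h
    simp only [Interp.cSem, ih h]
    rfl
  | and C D ihC ihD =>
    intro h
    simp only [DLConcept.roleNames, Finset.mem_union] at h
    push_neg at h
    simp only [Interp.cSem, ihC h.1, ihD h.2]
    rfl
  | or C D ihC ihD =>
    intro h
    simp only [DLConcept.roleNames, Finset.mem_union] at h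
    push_neg at h
    simp only [Interp.cSem, ihC h.1, ihD h.2]
    rfl
  | all R C ih =>
    intro h
    simp only [DLConcept.roleNames, Finset.mem_insert] at h
    push_neg at h
    have hR : R.name ≠ u := fun hh => h.1 hh.symm
    simp only [Interp.cSem, ih h.2, extend_rSem_ne hR]
    rfl
  | ex R C ih =>
    intro h
    simp only [DLConcept.roleNames, Finset.mem_insert] at h
    push_neg at h
    have hR : R.name ≠ u := fun hh => h.1 hh.symm
    simp only [Interp.cSem, ih h.2, extend_rSem_ne hR]
    rfl
  | atleast n R C ih =>
    intro h
    simp only [DLConcept.roleNames, Finset.mem_insert] at h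
    push_neg at h
    have hR : R.name ≠ u := fun hh => h.1 hh.symm
    simp only [Interp.cSem, ih h.2, extend_rSem_ne hR]
    rfl
  | atmost n R C ih =>
    intro h
    simp only [DLConcept.roleNames, Finset.mem_insert] at h
    push_neg at h
    have hR : R.name ≠ u := fun hh => h.1 hh.symm
    simp only [Interp.cSem, ih h.2, extend_rSem_ne hR]
    rfl

/-! ### Restriction of an interpretation to a subset -/

def Interp.restrict (I : Interp) (D : Set I.Dom) (h : D.Nonempty) : Interp :=
  ⟨↥D, h.to_subtype, fun a => {y | (y : I.Dom) ∈ I.cI a}, fun r a b => I.rI r a b⟩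

lemma restrict_rSem {I : Interp} {D : Set I.Dom} {h : D.Nonempty} {R : Role}
    {a b : (I.restrict D h).Dom} :
    (I.restrict D h).rSem R a b ↔ I.rSem R a.1 b.1 := by
  cases R <;> exact Iff.rfl

lemma restrict_cSem {I : Interp} {D : Set I.Dom} {hD : D.Nonempty}
    {names : Finset ℕ}
    (hcl : ∀ R : Role, R.name ∈ names → ∀ y ∈ D, ∀ z, I.rSem R y z → z ∈ D) :
    ∀ E : DLConcept, E.roleNames ⊆ names → ∀ y : (I.restrict D hD).Dom,
      (y ∈ (I.restrict D hD).cSem E ↔ y.1 ∈ I.cSem E) := by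
  intro E
  induction E with
  | top => intro _ y; simp [Interp.cSem]
  | bot => intro _ y; simp [Interp.cSem]
  | atom a => intro _ y; exact Iff.rfl
  | neg C ih =>
    intro h y
    simp only [DLConcept.roleNames] at h
    simp only [Interp.cSem, Set.mem_compl_iff, ih h y]
  | and C D' ihC ihD =>
    intro h y
    simp only [DLConcept.roleNames, Finset.union_subset_iff] at h
    simp only [Interp.cSem, Set.mem_inter_iff, ihC h.1 y, ihD h.2 y]
  | or C D' ihC ihD =>
    intro h y
    simp only [DLConcept.roleNames, Finset.union_subset_iff] at h
    simp only [Interp.cSem, Set.mem_union, ihC h.1 y, ihD h.2 y]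
  | all R C ih =>
    intro h y
    simp only [DLConcept.roleNames, Finset.insert_subset_iff] at h
    simp only [Interp.cSem, Set.mem_setOf_eq]
    constructor
    · intro hy z hz
      have hzD : z ∈ D := hcl R h.1 _ y.2 z hz
      exact (ih h.2 ⟨z, hzD⟩).mp (hy ⟨z, hzD⟩ (restrict_rSem.mpr hz))
    · intro hy z hz
      exact (ih h.2 z).mpr (hy z.1 (restrict_rSem.mp hz))
  | ex R C ih =>
    intro h y
    simp only [DLConcept.roleNames, Finset.insert_subset_iff] at h
    simp only [Interp.cSem, Set.mem_setOf_eq]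
    constructor
    · rintro ⟨z, hz, hzC⟩
      exact ⟨z.1, restrict_rSem.mp hz, (ih h.2 z).mp hzC⟩
    · rintro ⟨z, hz, hzC⟩
      have hzD : z ∈ D := hcl R h.1 _ y.2 z hz
      exact ⟨⟨z, hzD⟩, restrict_rSem.mpr hz, (ih h.2 ⟨z, hzD⟩).mpr hzC⟩
  | atleast n R C ih =>
    intro h y
    simp only [DLConcept.roleNames, Finset.insert_subset_iff] at h
    have e : {z : (I.restrict D hD).Dom // (I.restrict D hD).rSem R y z ∧
        z ∈ (I.restrict D hD).cSem C} ≃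
        {z : I.Dom // I.rSem R y.1 z ∧ z ∈ I.cSem C} :=
      { toFun := fun z => ⟨z.1.1, restrict_rSem.mp z.2.1, (ih h.2 z.1).mp z.2.2⟩
        invFun := fun z => ⟨⟨z.1, hcl R h.1 _ y.2 z.1 z.2.1⟩, restrict_rSem.mpr z.2.1,
          (ih h.2 ⟨z.1, hcl R h.1 _ y.2 z.1 z.2.1⟩).mpr z.2.2⟩
        left_inv := fun z => rfl
        right_inv := fun z => rfl }
    have hmk : Cardinal.mk {z : (I.restrict D hD).Dom // (I.restrict D hD).rSem R y z ∧
        z ∈ (I.restrict D hD).cSem C} =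
        Cardinal.mk {z : I.Dom // I.rSem R y.1 z ∧ z ∈ I.cSem C} := Cardinal.mk_congr e
    simp only [Interp.cSem, Set.mem_setOf_eq]
    rw [hmk]
  | atmost n R C ih =>
    intro h y
    simp only [DLConcept.roleNames, Finset.insert_subset_iff] at h
    have e : {z : (I.restrict D hD).Dom // (I.restrict D hD).rSem R y z ∧
        z ∈ (I.restrict D hD).cSem C} ≃
        {z : I.Dom // I.rSem R y.1 z ∧ z ∈ I.cSem C} :=
      { toFun := fun z => ⟨z.1.1, restrict_rSem.mp z.2.1, (ih h.2 z.1).mp z.2.2⟩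
        invFun := fun z => ⟨⟨z.1, hcl R h.1 _ y.2 z.1 z.2.1⟩, restrict_rSem.mpr z.2.1,
          (ih h.2 ⟨z.1, hcl R h.1 _ y.2 z.1 z.2.1⟩).mpr z.2.2⟩
        left_inv := fun z => rfl
        right_inv := fun z => rfl }
    have hmk : Cardinal.mk {z : (I.restrict D hD).Dom // (I.restrict D hD).rSem R y z ∧
        z ∈ (I.restrict D hD).cSem C} =
        Cardinal.mk {z : I.Dom // I.rSem R y.1 z ∧ z ∈ I.cSem C} := Cardinal.mk_congr e
    simp only [Interp.cSem, Set.mem_setOf_eq]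
    rw [hmk]

end Aux2
section Aux3

lemma reduction_correct (Rp : Set ℕ) (C : DLConcept) (T : Terminology)
    (RIA : List (Role × Role)) (names : Finset ℕ)
    (hC : C.roleNames ⊆ names) (hT : termRoleNames T ⊆ names)
    (hR : riaRoleNames RIA ⊆ names) (u : ℕ) (hu : u ∈ Rp) (hun : u ∉ names) :
    SatisfiableT Rp RIA T C ↔
      Satisfiable Rp (addU RIA names u)
        (.and C (.and (CT T) (.all (.atom u) (CT T)))) := by
  constructor
  · -- forward: extend a model of T by a universal role u
    rintro ⟨I, hGood, hRH, hMT, x, hx⟩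
    refine ⟨I.extend u, ?_, ?_, ?_⟩
    · -- Good
      intro r hr
      by_cases hru : r = u
      · subst hru
        intro a b c _ _
        show (if r = r then (fun _ _ => True) else I.rI r) a c
        simp
      · intro a b c hab hbc
        have hab' : I.rI r a b := by simpa [Interp.extend, hru] using hab
        have hbc' : I.rI r b c := by simpa [Interp.extend, hru] using hbc
        show (if r = u then (fun _ _ => True) else I.rI r) a c
        simp only [if_neg hru]
        exact hGood r hr hab' hbc'
    · -- ModelsRH
      intro R S hRS x' y' hxy
      by_cases hSu : S.name = u
      · exact extend_rSem_u (I := I) hSu x' y'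
      · have hRS' : SubRole RIA R S := subRole_of_addU RIA names u (fun n hn => hR hn) hun hRS hSu
        have hRn : R.name ≠ u := by
          rcases subRole_head hRS' with rfl | hmem
          · exact hSu
          · intro hh; exact hun (hR (hh ▸ hmem))
        rw [extend_rSem_ne hRn] at hxy
        rw [extend_rSem_ne hSu]
        exact hRH R S hRS' x' y' hxy
    · -- nonempty
      refine ⟨x, ?_, ?_, ?_⟩
      · rw [show ((I.extend u).cSem C) = I.cSem C from
          extend_cSem C (fun hmem => hun (hC hmem))]
        exact hx
      · rw [show ((I.extend u).cSem (CT T)) = I.cSem (CT T) from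
          extend_cSem (CT T) (fun hmem => hun (hT (roleNames_CT T hmem)))]
        exact modelsT_iff.mp hMT x
      · intro y hy
        rw [show ((I.extend u).cSem (CT T)) = I.cSem (CT T) from
          extend_cSem (CT T) (fun hmem => hun (hT (roleNames_CT T hmem)))]
        exact modelsT_iff.mp hMT y
  · -- backward: restrict to u-successors of a witness
    rintro ⟨J, hGood, hRH, x, hxC, hxCT, hxAll⟩
    have htrans : Transitive (J.rI u) := hGood u hu
    set D : Set J.Dom := {y | y = x ∨ J.rI u x y} with hD
    have hxD : x ∈ D := Or.inl rfl
    have hDne : D.Nonempty := ⟨x, hxD⟩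
    -- closure of D under roles with names in `names`
    have hcl : ∀ R : Role, R.name ∈ names → ∀ y ∈ D, ∀ z, J.rSem R y z → z ∈ D := by
      intro R hr y hy z hyz
      have hedge : (R, Role.atom u) ∈ addU RIA names u := by
        cases R with
        | atom r => exact atomU_mem_addU hr
        | inv r => exact invU_mem_addU hr
      have hsub : SubRole (addU RIA names u) R (Role.atom u) :=
        Relation.ReflTransGen.single (Or.inl hedge)
      have huz : J.rI u y z := hRH R (Role.atom u) hsub y z hyz
      rcases hy with rfl | hy
      · exact Or.inr huz
      · exact Or.inr (htrans hy huz)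
    -- every element of D satisfies CT T
    have hDCT : ∀ y ∈ D, y ∈ J.cSem (CT T) := by
      intro y hy
      rcases hy with rfl | hy
      · exact hxCT
      · exact hxAll y hy
    refine ⟨J.restrict D hDne, ?_, ?_, ?_, ?_⟩
    · intro r hr a b c hab hbc
      exact hGood r hr hab hbc
    · intro R S hRS a b hab
      have := hRH R S (subRole_addU hRS) a.1 b.1 (restrict_rSem.mp hab)
      exact restrict_rSem.mpr this
    · intro p hp y hy
      have h1 := mem_termRoleNames hp
      have hy1 : y.1 ∈ J.cSem p.1 :=
        (restrict_cSem hcl p.1 (fun a ha => hT (h1.1 ha)) y).mp hy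
      have hy2 : y.1 ∈ J.cSem p.2 :=
        mem_cSem_CT.mp (hDCT y.1 y.2) p hp hy1
      exact (restrict_cSem hcl p.2 (fun a ha => hT (h1.2 ha)) y).mpr hy2
    · refine ⟨⟨x, hxD⟩, (restrict_cSem hcl C hC ⟨x, hxD⟩).mpr hxC⟩

end Aux3
section Aux4

lemma CT_size (T : Terminology) : (CT T).size ≤ 2 * termSize T + 1 := by
  induction T with
  | nil => simp [CT, DLConcept.size, termSize]
  | cons q l ih =>
    have h1 : (CT (q :: l)).size = q.1.size + 1 + q.2.size + 1 + (CT l).size + 1 := rfl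
    have h2 : termSize (q :: l) = q.1.size + q.2.size + 1 + termSize l := rfl
    have := q.1.size_pos
    have := q.2.size_pos
    omega

lemma roleNames_card (C : DLConcept) : C.roleNames.card ≤ C.size := by
  induction C with
  | top => simp [DLConcept.roleNames, DLConcept.size]
  | bot => simp [DLConcept.roleNames, DLConcept.size]
  | atom a => simp [DLConcept.roleNames, DLConcept.size]
  | neg C ih => simp only [DLConcept.roleNames, DLConcept.size]; omega
  | and C D ihC ihD =>
    simp only [DLConcept.roleNames, DLConcept.size]
    have := Finset.card_union_le C.roleNames D.roleNames
    omega
  | or C D ihC ihD =>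
    simp only [DLConcept.roleNames, DLConcept.size]
    have := Finset.card_union_le C.roleNames D.roleNames
    omega
  | all R C ih =>
    simp only [DLConcept.roleNames, DLConcept.size]
    have := Finset.card_insert_le R.name C.roleNames
    omega
  | ex R C ih =>
    simp only [DLConcept.roleNames, DLConcept.size]
    have := Finset.card_insert_le R.name C.roleNames
    omega
  | atleast n R C ih =>
    simp only [DLConcept.roleNames, DLConcept.size]
    have := Finset.card_insert_le R.name C.roleNames
    omega
  | atmost n R C ih =>
    simp only [DLConcept.roleNames, DLConcept.size]
    have := Finset.card_insert_le R.name C.roleNames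
    omega

lemma termRoleNames_card (T : Terminology) : (termRoleNames T).card ≤ termSize T := by
  induction T with
  | nil => simp [termRoleNames, termSize]
  | cons q l ih =>
    have h1 : termRoleNames (q :: l) = q.1.roleNames ∪ q.2.roleNames ∪ termRoleNames l := rfl
    have h2 : termSize (q :: l) = q.1.size + q.2.size + 1 + termSize l := rfl
    have h3 := Finset.card_union_le (q.1.roleNames ∪ q.2.roleNames) (termRoleNames l)
    have h4 := Finset.card_union_le q.1.roleNames q.2.roleNames
    have h5 := roleNames_card q.1
    have h6 := roleNames_card q.2
    rw [h1, h2]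
    omega

lemma riaRoleNames_card (RIA : List (Role × Role)) :
    (riaRoleNames RIA).card ≤ 2 * RIA.length := by
  induction RIA with
  | nil => simp [riaRoleNames]
  | cons q l ih =>
    have h1 : riaRoleNames (q :: l) = insert q.1.name (insert q.2.name (riaRoleNames l)) := rfl
    have h2 := Finset.card_insert_le q.1.name (insert q.2.name (riaRoleNames l))
    have h3 := Finset.card_insert_le q.2.name (riaRoleNames l)
    rw [h1]
    simp only [List.length_cons]
    omega

lemma addU_length (RIA : List (Role × Role)) (names : Finset ℕ) (u : ℕ) :
    (addU RIA names u).length = RIA.length + 2 * names.card := by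
  simp [addU, Finset.length_sort]
  omega

/-- The role names of a triple. -/
def tripNames (x : DLConcept × Terminology × List (Role × Role)) : Finset ℕ :=
  x.1.roleNames ∪ termRoleNames x.2.1 ∪ riaRoleNames x.2.2

/-- A fresh transitive role name for a triple. -/
noncomputable def shiqFresh (Rp : Set ℕ) (hinf : Rp.Infinite)
    (x : DLConcept × Terminology × List (Role × Role)) : ℕ :=
  ((hinf.diff (tripNames x).finite_toSet).nonempty).choose

lemma shiqFresh_spec (Rp : Set ℕ) (hinf : Rp.Infinite)
    (x : DLConcept × Terminology × List (Role × Role)) :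
    shiqFresh Rp hinf x ∈ Rp ∧ shiqFresh Rp hinf x ∉ tripNames x := by
  have h := ((hinf.diff (tripNames x).finite_toSet).nonempty).choose_spec
  exact ⟨h.1, fun hmem => h.2 (Finset.mem_coe.mpr hmem)⟩

end Aux4

/-- **Theorem 1: polynomial reduction.** Satisfiability of SHIQ-concepts
w.r.t. terminologies and role hierarchies is polynomially reducible to satisfiability
of SHIQ-concepts w.r.t. role hierarchies alone: there are a polynomial `p` and a map
`F` sending each triple `(C, T, RIA)` to a pair `(C', RIA')` of polynomially bounded
size such that `C` is satisfiable w.r.t. `T` and `R⁺` iff `C'` is satisfiable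
w.r.t. `R'⁺`.  (The set `Rp` of transitive role names is assumed infinite, so that a
fresh transitive role is always available.) -/
theorem internalisation_polynomial_reduction (Rp : Set ℕ) (hinf : Rp.Infinite) :
    ∃ (p : Polynomial ℕ)
      (F : DLConcept × Terminology × List (Role × Role) → DLConcept × List (Role × Role)),
      ∀ (C : DLConcept) (T : Terminology) (RIA : List (Role × Role)),
        ((F (C, T, RIA)).1.size + riaSize (F (C, T, RIA)).2 ≤
            p.eval (C.size + termSize T + riaSize RIA)) ∧
        (SatisfiableT Rp RIA T C ↔ Satisfiable Rp (F (C, T, RIA)).2 (F (C, T, RIA)).1) := by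
  classical
  refine ⟨Polynomial.C 6 + Polynomial.C 10 * Polynomial.X,
    fun x =>
      (DLConcept.and x.1 (DLConcept.and (CT x.2.1)
          (DLConcept.all (Role.atom (shiqFresh Rp hinf x)) (CT x.2.1))),
        addU x.2.2 (tripNames x) (shiqFresh Rp hinf x)), ?_⟩
  intro C T RIA
  set x : DLConcept × Terminology × List (Role × Role) := (C, T, RIA) with hx
  set u : ℕ := shiqFresh Rp hinf x with hu
  have hspec := shiqFresh_spec Rp hinf x
  have hnames : tripNames x = C.roleNames ∪ termRoleNames T ∪ riaRoleNames RIA := rfl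
  constructor
  · -- size bound
    have h1 : (DLConcept.and C (DLConcept.and (CT T)
        (DLConcept.all (Role.atom u) (CT T)))).size
        = C.size + ((CT T).size + ((CT T).size + 2) + 1) + 1 := rfl
    have h2 : riaSize (addU RIA (tripNames x) u) = 3 * (RIA.length + 2 * (tripNames x).card) := by
      rw [riaSize, addU_length]
    have hct := CT_size T
    have hcard : (tripNames x).card ≤ C.size + termSize T + 2 * RIA.length := by
      rw [hnames]
      have := Finset.card_union_le (C.roleNames ∪ termRoleNames T) (riaRoleNames RIA)
      have := Finset.card_union_le C.roleNames (termRoleNames T)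
      have := roleNames_card C
      have := termRoleNames_card T
      have := riaRoleNames_card RIA
      omega
    have heval : (Polynomial.C 6 + Polynomial.C 10 * Polynomial.X).eval
        (C.size + termSize T + riaSize RIA) = 6 + 10 * (C.size + termSize T + riaSize RIA) := by
      simp
    rw [heval]
    show (DLConcept.and C (DLConcept.and (CT T)
        (DLConcept.all (Role.atom u) (CT T)))).size
        + riaSize (addU RIA (tripNames x) u) ≤ _
    rw [h1, h2]
    simp only [riaSize]
    omega
  · -- equivalence
    exact reduction_correct Rp C T RIA (tripNames x)
      (by rw [hnames]; intro a ha; simp [Finset.mem_union]; tauto)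
      (by rw [hnames]; intro a ha; simp [Finset.mem_union]; tauto)
      (by rw [hnames]; intro a ha; simp [Finset.mem_union]; tauto)
      u hspec.1 hspec.2
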